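/- For any finite graph G and vertex subset S of G, if u ∈ S has no neighbors among the odd S-components (no neighbor in ⟨G,S⟩), then df(S \ {u}) ≥ df(S) + 1. -/

import Mathlib

open SimpleGraph Set

variable {V : Type*} [Fintype V] [DecidableEq V]

/-- The vertex set (in `V`) of a connected component of the graph induced on `B`. -/
def compSupp (G : SimpleGraph V) (B : Set V)
    (c : (G.induce B).ConnectedComponent) : Set V :=
  Subtype.val '' c.supp

/-- `A` is (the vertex set of) a connected component of `G` restricted to `B`. -/
def IsCompOf (G : SimpleGraph V) (B : Set V) (A : Set V) : Prop :=
  ∃ c : (G.induce B).ConnectedComponent, A = compSupp G B c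

/-- The number of odd connected components of `G` restricted to `B`. -/
noncomputable def oddComps (G : SimpleGraph V) (B : Set V) : ℕ :=
  Set.ncard {c : (G.induce B).ConnectedComponent | Odd (compSupp G B c).ncard}

/-- The deficiency `df(S) = od(S) - |S|`. -/
noncomputable def df (G : SimpleGraph V) (S : Set V) : ℤ :=
  (oddComps G Sᶜ : ℤ) - S.ncard

/-- The induced subgraph on `A` has a perfect matching. -/
def HasPM (G : SimpleGraph V) (A : Set V) : Prop :=
  ∃ M : Subgraph (G.induce A), M.IsPerfectMatching

/-- `Df(S)`: total number of vertices in components of `G - S` with no perfect matching. -/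
noncomputable def Df (G : SimpleGraph V) (S : Set V) : ℕ :=
  Set.ncard (⋃ c ∈ {c : (G.induce Sᶜ).ConnectedComponent |
    ¬ HasPM G (compSupp G Sᶜ c)}, compSupp G Sᶜ c)

/-- The set of `M`-exposed vertices. -/
def exposed (G : SimpleGraph V) (M : Subgraph G) : Set V :=
  {v | v ∉ M.support}

/-- `A` induces a factor-critical graph. -/
def FactorCritical (G : SimpleGraph V) (A : Set V) : Prop :=
  ∀ v ∈ A, HasPM G (A \ {v})

/-- The neighborhood of `T ⊆ S` in the bipartite minor `⟨G,S⟩`: the odd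
`S`-components adjacent to some vertex of `T`. -/
def minorNbhd (G : SimpleGraph V) (S T : Set V) :
    Set (G.induce Sᶜ).ConnectedComponent :=
  {c | Odd (compSupp G Sᶜ c).ncard ∧ ∃ u ∈ T, ∃ w ∈ compSupp G Sᶜ c, G.Adj u w}

/-- `S` is a Gallai-Edmonds set of `G`. -/
def GallaiEdmonds (G : SimpleGraph V) (S : Set V) : Prop :=
  (∀ c : (G.induce Sᶜ).ConnectedComponent,
      Even (compSupp G Sᶜ c).ncard → HasPM G (compSupp G Sᶜ c)) ∧
  (∀ c : (G.induce Sᶜ).ConnectedComponent,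
      Odd (compSupp G Sᶜ c).ncard → FactorCritical G (compSupp G Sᶜ c)) ∧
  (∀ T ⊆ S, T.Nonempty → T.ncard + 1 ≤ (minorNbhd G S T).ncard)

/-- `w` and `w'` lie in the same `S`-component. -/
def SameComp (G : SimpleGraph V) (S : Set V) (w w' : V) : Prop :=
  ∃ c : (G.induce Sᶜ).ConnectedComponent,
    w ∈ compSupp G Sᶜ c ∧ w' ∈ compSupp G Sᶜ c

/-- `M` is a maximum matching of `G`. -/
def IsMaximumMatching (G : SimpleGraph V) (M : Subgraph G) : Prop :=
  M.IsMatching ∧ ∀ M' : Subgraph G, M'.IsMatching →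
    M'.edgeSet.ncard ≤ M.edgeSet.ncard
lemma compSupp_inj {G : SimpleGraph V} {B : Set V}
    {c c' : (G.induce B).ConnectedComponent}
    (h : compSupp G B c = compSupp G B c') : c = c' := by
  obtain ⟨x, hx⟩ := c.exists_rep
  have hx' : (G.induce B).connectedComponentMk x = c := hx
  have hxm : (x : V) ∈ compSupp G B c :=
    ⟨x, (ConnectedComponent.mem_supp_iff _ _).mpr hx', rfl⟩
  rw [h] at hxm
  obtain ⟨y, hy, hyx⟩ := hxm
  have hyx' : y = x := Subtype.ext hyx
  subst hyx'
  rw [ConnectedComponent.mem_supp_iff] at hy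
  rw [← hx', hy]

lemma supp_stable {G : SimpleGraph V} {S : Set V} {u : V}
    (c : (G.induce Sᶜ).ConnectedComponent)
    (hadj : ∀ w ∈ compSupp G Sᶜ c, ¬ G.Adj u w) :
    compSupp G (S \ {u})ᶜ
      (c.map (induceHomOfLE G (compl_subset_compl.mpr diff_subset)).toHom)
      = compSupp G Sᶜ c := by
  set φ := (induceHomOfLE G (compl_subset_compl.mpr diff_subset : Sᶜ ⊆ (S \ {u})ᶜ)).toHom with hφ
  have key : ∀ (a b : ↥(S \ {u})ᶜ), (G.induce (S \ {u})ᶜ).Walk a b →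
      a.val ∈ compSupp G Sᶜ c → b.val ∈ compSupp G Sᶜ c := by
    intro a b p
    induction p with
    | nil => exact id
    | @cons a a' b h p ih =>
      intro ha
      apply ih
      have hGadj : G.Adj a.val a'.val := h
      have ha'u : a'.val ≠ u := by
        intro he
        have h3 := hGadj.symm
        rw [he] at h3
        exact hadj a.val ha h3
      have ha'S : a'.val ∈ Sᶜ := by
        have h2 := a'.prop
        simp only [Set.mem_compl_iff, Set.mem_diff, Set.mem_singleton_iff, not_and, not_not] at h2
        intro hS
        exact ha'u (h2 hS)
      obtain ⟨xa, hxa, hxav⟩ := ha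
      have haS : a.val ∈ Sᶜ := hxav ▸ xa.prop
      have hadj' : (G.induce Sᶜ).Adj ⟨a.val, haS⟩ ⟨a'.val, ha'S⟩ := hGadj
      have hmk : (G.induce Sᶜ).connectedComponentMk ⟨a'.val, ha'S⟩ = c := by
        have hxaeq : xa = ⟨a.val, haS⟩ := Subtype.ext hxav
        rw [hxaeq] at hxa
        rw [ConnectedComponent.mem_supp_iff] at hxa
        rw [← hxa]
        exact ConnectedComponent.eq.mpr hadj'.symm.reachable
      exact ⟨⟨a'.val, ha'S⟩, (ConnectedComponent.mem_supp_iff _ _).mpr hmk, rfl⟩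
  ext y
  constructor
  · rintro ⟨yy, hyy, rfl⟩
    obtain ⟨x, hx⟩ := c.exists_rep
    have hx' : (G.induce Sᶜ).connectedComponentMk x = c := hx
    rw [ConnectedComponent.mem_supp_iff, ← hx', ConnectedComponent.map_mk,
      ConnectedComponent.eq] at hyy
    obtain ⟨p⟩ := hyy.symm
    exact key _ _ p ⟨x, (ConnectedComponent.mem_supp_iff _ _).mpr hx', rfl⟩
  · rintro ⟨x, hx, rfl⟩
    refine ⟨φ x, ?_, rfl⟩
    rw [ConnectedComponent.mem_supp_iff] at hx ⊢
    rw [← hx, hφ, ConnectedComponent.map_mk]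

/-- If `u ∈ S` has no neighbor in any odd `S`-component, then removing `u`
from `S` increases the deficiency by at least one. -/
theorem stmt_17 (G : SimpleGraph V) (S : Set V) (u : V) (hu : u ∈ S)
    (hno : ∀ c : (G.induce Sᶜ).ConnectedComponent,
      Odd (compSupp G Sᶜ c).ncard → ∀ w ∈ compSupp G Sᶜ c, ¬ G.Adj u w) :
    df G S + 1 ≤ df G (S \ {u}) := by
  set f := ConnectedComponent.map
    (induceHomOfLE G (compl_subset_compl.mpr diff_subset : Sᶜ ⊆ (S \ {u})ᶜ)).toHom with hf
  set A := {c : (G.induce Sᶜ).ConnectedComponent | Odd (compSupp G Sᶜ c).ncard} with hA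
  set A' := {c : (G.induce (S \ {u})ᶜ).ConnectedComponent |
    Odd (compSupp G (S \ {u})ᶜ c).ncard} with hA'
  have hsupp : ∀ c ∈ A, compSupp G (S \ {u})ᶜ (f c) = compSupp G Sᶜ c := fun c hc =>
    supp_stable c (hno c hc)
  have hmaps : ∀ c ∈ A, f c ∈ A' := by
    intro c hc
    show Odd _
    rw [hsupp c hc]
    exact hc
  have hinj : Set.InjOn f A := by
    intro c hc c' hc' he
    apply compSupp_inj (B := Sᶜ)
    rw [← hsupp c hc, ← hsupp c' hc', he]
  have hle : oddComps G Sᶜ ≤ oddComps G (S \ {u})ᶜ := by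
    show A.ncard ≤ A'.ncard
    rw [← Set.ncard_image_of_injOn hinj]
    exact Set.ncard_le_ncard (Set.image_subset_iff.mpr hmaps) (Set.toFinite _)
  have hcard : (S \ {u}).ncard = S.ncard - 1 := Set.ncard_diff_singleton_of_mem hu
  have hpos : 1 ≤ S.ncard := (Set.ncard_pos S.toFinite).mpr ⟨u, hu⟩
  simp only [df, hcard]
  omega
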